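/- Let (w_n)_t and (w_d)_t be real sequences such that ∑_{τ=0}^{t-1} (w_n)_τ ≥ 0 for all t (open-loop dissipation inequality), and suppose the barrier sequence b_t = -∑_{τ=0}^{t-1}((w_n)_τ - (w_d)_τ) satisfies b_{t+1} ≥ (1-η) b_t for all t with b_0 = 0 and η ∈ [0,1]. Then ∑_{τ=0}^{t-1} (w_d)_τ ≥ 0 for all t ∈ ℕ. -/
import Mathlib

theorem stmt_3 (wn wd : ℕ → ℝ) (η : ℝ) (hη0 : 0 ≤ η) (hη1 : η ≤ 1)
    (hwn : ∀ t : ℕ, 0 ≤ ∑ τ ∈ Finset.range t, wn τ)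
    (b : ℕ → ℝ) (hb : ∀ t : ℕ, b t = -∑ τ ∈ Finset.range t, (wn τ - wd τ))
    (hrec : ∀ t : ℕ, b (t + 1) ≥ (1 - η) * b t) :
    ∀ t : ℕ, 0 ≤ ∑ τ ∈ Finset.range t, wd τ := by
  have hbpos : ∀ t, 0 ≤ b t := by
    intro t
    induction t with
    | zero => simp [hb 0]
    | succ n ih =>
      have := hrec n
      nlinarith
  intro t
  have h := hb t
  have h2 := hwn t
  have h3 := hbpos t
  rw [Finset.sum_sub_distrib] at h
  linarith
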